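/- Let z be a submodular function on the finite set I. The map Φ_z is surjective onto the set of nonempty faces of Π(z), the image of Ψ_z restricted to nonempty faces is exactly the set Pre(z) of preorders conforming to z, and Φ_z and Ψ_z restrict to mutually inverse bijections between Pre(z) and the set of nonempty faces of Π(z). -/

import Mathlib

open scoped Classical

/-- A preorder on `X`, bundled as a reflexive and transitive relation. -/
structure Preo (X : Type*) where
  le : X → X → Prop
  le_refl : ∀ x, le x x
  le_trans : ∀ {x y z}, le x y → le y z → le x z

namespace Preo

variable {X : Type*}

/-- The refinement partial order `P ⪯ Q` on preorders: `x ≤_P y` implies `x ≤_Q y`. -/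
def Le (P Q : Preo X) : Prop := ∀ ⦃a b⦄, P.le a b → Q.le a b

/-- The opposite preorder. -/
def op (P : Preo X) : Preo X where
  le a b := P.le b a
  le_refl x := P.le_refl x
  le_trans h h' := P.le_trans h' h

/-- The meet (pointwise intersection) of two preorders. -/
def meet (P Q : Preo X) : Preo X where
  le a b := P.le a b ∧ Q.le a b
  le_refl x := ⟨P.le_refl x, Q.le_refl x⟩
  le_trans h h' := ⟨P.le_trans h.1 h'.1, Q.le_trans h.2 h'.2⟩

/-- The join of two preorders: zigzag chains, i.e. the reflexive-transitive closure
of the union of the two relations. -/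
def join (P Q : Preo X) : Preo X where
  le a b := Relation.ReflTransGen (fun u v => P.le u v ∨ Q.le u v) a b
  le_refl _ := Relation.ReflTransGen.refl
  le_trans h h' := Relation.ReflTransGen.trans h h'

/-- The bubble relation: `a` and `b` lie in the same bubble of `P`. -/
def bubRel (P : Preo X) (a b : X) : Prop := P.le a b ∧ P.le b a

/-- `R ◁ P` : `R` is a subdivision of `P`, i.e. `R ⪯ P` and `R = P ∧ (P^op ∨ R)`. -/
def Subdiv (R P : Preo X) : Prop := R.Le P ∧ R = P.meet (P.op.join R)

/-- `P ◀ Q` : `Q` is a contraction of `P`, i.e. `P ⪯ Q` and `Q = P ∨ (P^op ∧ Q)`. -/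
def Contr (P Q : Preo X) : Prop := P.Le Q ∧ Q = P.join (P.op.meet Q)

/-- `K` is a convex subset for the preorder `P`. -/
def ConvexIn (P : Preo X) (K : Set X) : Prop :=
  ∀ ⦃x y z⦄, x ∈ K → y ∈ K → P.le x z → P.le z y → z ∈ K

/-- `K` is connected for (the restriction to `K` of) the preorder `P`:
any two of its elements are joined by a zigzag chain of comparabilities within `K`. -/
def ConnectedIn (P : Preo X) (K : Set X) : Prop :=
  ∀ ⦃x y⦄, x ∈ K → y ∈ K →
    Relation.ReflTransGen (fun u v => u ∈ K ∧ v ∈ K ∧ (P.le u v ∨ P.le v u)) x y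

/-- A total preorder. -/
def Total (P : Preo X) : Prop := ∀ a b, P.le a b ∨ P.le b a

/-- `L` is a linear extension of `P`: `L` is total, `P ⪯ L`, and the bubbles coincide. -/
def IsLinExt (P L : Preo X) : Prop :=
  L.Total ∧ P.Le L ∧ ∀ a b, P.bubRel a b ↔ L.bubRel a b

/-- A finite down-set of the preorder `P`. -/
def IsDownset (P : Preo X) (A : Finset X) : Prop :=
  ∀ ⦃x y⦄, y ∈ A → P.le x y → x ∈ A

/-- A convex finite subset of the preorder `P`. -/
def ConvexF (P : Preo X) (C : Finset X) : Prop :=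
  ∀ ⦃x y z⦄, x ∈ C → y ∈ C → P.le x z → P.le z y → z ∈ C

/-- The down-set generated by a finite set `C`. -/
noncomputable def downClosure [Fintype X] (P : Preo X) (C : Finset X) : Finset X :=
  Finset.univ.filter (fun x => ∃ y ∈ C, P.le x y)

/-- The bubble of an element `a`. -/
noncomputable def bubble [Fintype X] (P : Preo X) (a : X) : Finset X :=
  Finset.univ.filter (fun x => P.le a x ∧ P.le x a)

/-- The set of bubbles of `P`. -/
noncomputable def bubbles [Fintype X] (P : Preo X) : Finset (Finset X) :=
  Finset.univ.image (fun a => P.bubble a)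

/-- `R` is a positive sub-preorder of `P`: in any loop
`x = x₀ ≤_R x₁ ≥_P x₂ ≤_R ⋯ ≤_R x_{2k-1} ≥_P x_{2k} = x`,
every descending step `≥_P` is actually `≥_R`. -/
def PositiveSub (R P : Preo X) : Prop :=
  ∀ (k : ℕ) (x : ℕ → X), x (2 * k) = x 0 →
    (∀ i < k, R.le (x (2 * i)) (x (2 * i + 1))) →
    (∀ i < k, P.le (x (2 * i + 2)) (x (2 * i + 1))) →
    ∀ i < k, R.le (x (2 * i + 2)) (x (2 * i + 1))

end Preo

section Submod

variable {I : Type*} [Fintype I] [DecidableEq I]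

/-- A function `z : P(I) → ℝ ∪ {∞}` is submodular if
`z(S ∪ T) + z(S ∩ T) ≤ z(S) + z(T)` for all `S, T`. -/
def Submodular (z : Finset I → WithTop ℝ) : Prop :=
  ∀ S T : Finset I, z (S ∪ T) + z (S ∩ T) ≤ z S + z T

/-- The corestriction `z_{/A}` : `U ↦ z(A ∪ U) − z(A)` (meaningful when `z A ≠ ⊤`). -/
noncomputable def coRes (z : Finset I → WithTop ℝ) (A U : Finset I) : WithTop ℝ :=
  z (A ∪ U) + ((-(z A).untopD 0 : ℝ) : WithTop ℝ)

/-- The extended generalized permutahedron of `z`: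
`x_I = z(I)` and `x_A ≤ z(A)` whenever `z(A) < ∞`. -/
def EGP (z : Finset I → WithTop ℝ) : Set (I → ℝ) :=
  {x | ((∑ i, x i : ℝ) : WithTop ℝ) = z Finset.univ ∧
       ∀ A : Finset I, ((∑ i ∈ A, x i : ℝ) : WithTop ℝ) ≤ z A}

/-- `z` restricted to subsets of `C` decomposes as the product of its restrictions to `S`
and `T`, where `C = S ⊔ T`. -/
def SplitsAlong (z : Finset I → WithTop ℝ) (C S T : Finset I) : Prop :=
  Disjoint S T ∧ S ∪ T = C ∧ ∀ E ⊆ C, z E = z (E ∩ S) + z (E ∩ T)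

/-- `z` restricted to subsets of `C` is indecomposable. -/
def IndecompOn (z : Finset I → WithTop ℝ) (C : Finset I) : Prop :=
  ∀ S T : Finset I, S.Nonempty → T.Nonempty → ¬ SplitsAlong z C S T

/-- `fam` is the partition underlying a factorization of `z` into indecomposable
extended Boolean functions. -/
def IsIndecompFactorization (z : Finset I → WithTop ℝ) (fam : Finset (Finset I)) : Prop :=
  (∀ B ∈ fam, B.Nonempty) ∧
  (∀ B ∈ fam, ∀ B' ∈ fam, B ≠ B' → Disjoint B B') ∧
  fam.sup id = Finset.univ ∧
  (∀ E : Finset I, z E = ∑ B ∈ fam, z (E ∩ B)) ∧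
  ∀ B ∈ fam, IndecompOn z B

/-- A family of finite subsets of `I` forming a topology on `I`. -/
def IsTopologyFam (F : Set (Finset I)) : Prop :=
  ∅ ∈ F ∧ Finset.univ ∈ F ∧ (∀ A ∈ F, ∀ B ∈ F, A ∪ B ∈ F) ∧ ∀ A ∈ F, ∀ B ∈ F, A ∩ B ∈ F

/-- The preorder `P` is compatible with the submodular function `z`. -/
def Compatible (z : Finset I → WithTop ℝ) (P : Preo I) : Prop :=
  (∀ A : Finset I, P.IsDownset A → z A ≠ ⊤) ∧
  ∀ A B : Finset I, P.IsDownset A → P.IsDownset B → A ⊆ B →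
    ∀ C₁ C₂ : Finset I, Disjoint C₁ C₂ → C₁ ∪ C₂ = B \ A →
      (∀ x ∈ C₁, ∀ y ∈ C₂, ¬ P.le x y ∧ ¬ P.le y x) →
      ∀ U ⊆ B \ A, coRes z A U = coRes z A (U ∩ C₁) + coRes z A (U ∩ C₂)

/-- For a convex subset `C` of `P`, the function `z_C : U ↦ z(A ∪ U) − z(A)`, where
`A = (↓C) \ C` with `↓C` the down-set generated by `C`. -/
noncomputable def zConv (z : Finset I → WithTop ℝ) (P : Preo I) (C U : Finset I) :
    WithTop ℝ :=
  coRes z (P.downClosure C \ C) U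

/-- The preorder `P` conforms to the submodular function `z`: it is compatible with `z`
and every product decomposition of `z_C`, for `C` convex in `P`, comes from a
disconnected decomposition of the preorder induced on `C`. -/
def Conforms (z : Finset I → WithTop ℝ) (P : Preo I) : Prop :=
  Compatible z P ∧
  ∀ C : Finset I, P.ConvexF C →
    ∀ C₁ C₂ : Finset I, Disjoint C₁ C₂ → C₁ ∪ C₂ = C →
      (∀ U ⊆ C, zConv z P C U = zConv z P C (U ∩ C₁) + zConv z P C (U ∩ C₂)) →
      ∀ x ∈ C₁, ∀ y ∈ C₂, ¬ P.le x y ∧ ¬ P.le y x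

/-- The preorder `pre(z)` associated to `z`: `x ≤ y` iff every `A` with `z(A) < ∞`
("open set") containing `y` contains `x`. -/
def preZ (z : Finset I → WithTop ℝ) : Preo I where
  le x y := ∀ A : Finset I, z A ≠ ⊤ → y ∈ A → x ∈ A
  le_refl _ := fun _ _ h => h
  le_trans h h' := fun A hA hy => h A hA (h' A hA hy)

/-- The preorder associated (by the Alexandroff correspondence) to a family of subsets. -/
def preOfFam (F : Set (Finset I)) : Preo I where
  le x y := ∀ A ∈ F, y ∈ A → x ∈ A
  le_refl _ := fun _ _ h => h
  le_trans h h' := fun A hA hy => h A hA (h' A hA hy)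

/-- `Alin(P, z)`: the affine space cut out by `x_A = z(A)` for `A` a down-set of `P`. -/
def Alin (z : Finset I → WithTop ℝ) (P : Preo I) : Set (I → ℝ) :=
  {x | ∀ A : Finset I, P.IsDownset A → ((∑ i ∈ A, x i : ℝ) : WithTop ℝ) = z A}

/-- `AlinBu(P, z)`: the affine space cut out by `x_C = z_C(C)` for `C` a bubble of `P`. -/
def AlinBu (z : Finset I → WithTop ℝ) (P : Preo I) : Set (I → ℝ) :=
  {x | ∀ a : I, ((∑ i ∈ P.bubble a, x i : ℝ) : WithTop ℝ) = zConv z P (P.bubble a) (P.bubble a)}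

/-- `Φ_z(P)`: the (possibly empty) face of `Π(z)` cut out by the equalities `x_A = z(A)`
for `A` a down-set of `P`. -/
def Phi (z : Finset I → WithTop ℝ) (P : Preo I) : Set (I → ℝ) :=
  {x | x ∈ EGP z ∧ ∀ A : Finset I, P.IsDownset A → ((∑ i ∈ A, x i : ℝ) : WithTop ℝ) = z A}

/-- `Ψ_z(G)`: the family of sets `A` with `z(A) < ∞` on which `x_A = z(A)` for all `x ∈ G`. -/
def PsiFam (z : Finset I → WithTop ℝ) (G : Set (I → ℝ)) : Set (Finset I) :=
  {A | z A ≠ ⊤ ∧ ∀ x ∈ G, ((∑ i ∈ A, x i : ℝ) : WithTop ℝ) = z A}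

/-- `Ψ_z(G)` as a preorder. -/
def PsiPre (z : Finset I → WithTop ℝ) (G : Set (I → ℝ)) : Preo I :=
  preOfFam (PsiFam z G)

/-- `z_P = ∏_{C ∈ b(P)} z_C`: the product over all bubbles of `P`. -/
noncomputable def zP (z : Finset I → WithTop ℝ) (P : Preo I) : Finset I → WithTop ℝ :=
  fun E => ∑ C ∈ P.bubbles, zConv z P C (E ∩ C)

/-- The restriction `z|_S` of `z` to subsets of `S`. -/
def restrictFn (z : Finset I → WithTop ℝ) (S : Finset I) :
    Finset {x : I // x ∈ S} → WithTop ℝ :=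
  fun U => z (U.map (Function.Embedding.subtype fun x => x ∈ S))

/-- The corestriction `z_{/S}` of `z`, on subsets of `I ∖ S`. -/
noncomputable def coresFn (z : Finset I → WithTop ℝ) (S : Finset I) :
    Finset {x : I // x ∉ S} → WithTop ℝ :=
  fun U => z (S ∪ U.map (Function.Embedding.subtype fun x => x ∉ S)) +
    ((-(z S).untopD 0 : ℝ) : WithTop ℝ)

/-- The restriction `P|_S` of a preorder to `S`. -/
def restrictPre (P : Preo I) (S : Finset I) : Preo {x : I // x ∈ S} where
  le a b := P.le a b
  le_refl a := P.le_refl a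
  le_trans h h' := P.le_trans h h'

/-- The corestriction `P_{/S}` of a preorder, on `I ∖ S`. -/
def coresPre (P : Preo I) (S : Finset I) : Preo {x : I // x ∉ S} where
  le a b := P.le a b
  le_refl a := P.le_refl a
  le_trans h h' := P.le_trans h h'

end Submod

/-!
`Φ_z(P)` is the face of `Π(z)` cut out by the constraints `x_A ≤ z(A)` for the down-sets `A` of
`P`, so their sum exposes it. It is nonempty for a compatible `P`: a point is assembled bubble by
bubble along a chain of down-sets `A ⊂ A ∪ C`, taking on each bubble `C` a point of `Π(z_{/A}|_C)`,
and compatibility (modularity of `z` on down-sets) makes the result tight on every down-set.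
These base polytopes are nonempty by raising coordinates one at a time until each lies in a tight
set, tight sets being closed under `∪` and `∩` by submodularity.

Conversely, the sets that are tight on a nonempty face `G` form a topology whose open sets are the
down-sets of `Ψ_z(G)`, and a relative interior point of `G` shows that `G` is the face they cut
out. Conformity on both sides is uncrossing: if `A`, `A ∪ C₁`, `A ∪ C₂` and `A ∪ C₁ ∪ C₂` are
tight at one point, then `z_{/A}` splits along `C₁, C₂`; and a splitting of `z_C` makes `A ∪ C₁`
and `A ∪ C₂` tight. For `Ψ_z(Φ_z(P)) = P`, a set tight on `Φ_z(P)` meets each bubble `C` in a set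
whose sum is constant on `Π(z_C)`, which forces `z_C` to split, so it is a union of bubbles; a
minimal violation `a ≤ b` of it being a down-set then yields a splitting of `z_C` on the interval
`C = [a, b]` that separates `a` from `b`, contradicting conformity.
-/

open Finset

lemma coe_eq_and_coe_eq_of_add_le {a b : ℝ} {c d : WithTop ℝ} (hac : (a : WithTop ℝ) ≤ c)
    (hbd : (b : WithTop ℝ) ≤ d) (h : c + d ≤ a + b) : c = a ∧ d = b := by
  induction c using WithTop.recTopCoe <;> induction d using WithTop.recTopCoe <;>
    simp_all only [top_add, add_top, ← WithTop.coe_add, top_le_iff, WithTop.coe_ne_top,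
      WithTop.coe_le_coe, WithTop.coe_inj]
  constructor <;> linarith

lemma coe_half_add_lt {a b : ℝ} {c : WithTop ℝ} (ha : (a : WithTop ℝ) ≤ c)
    (hb : (b : WithTop ℝ) < c) : ((1 / 2 * a + 1 / 2 * b : ℝ) : WithTop ℝ) < c := by
  induction c using WithTop.recTopCoe with
  | top => exact WithTop.coe_lt_top _
  | coe c =>
    rw [WithTop.coe_le_coe] at ha
    rw [WithTop.coe_lt_coe] at hb ⊢
    linarith

lemma coe_le_iff_le_untopD {a : ℝ} {c : WithTop ℝ} (hc : c ≠ ⊤) :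
    (a : WithTop ℝ) ≤ c ↔ a ≤ c.untopD 0 := by
  obtain ⟨r, rfl⟩ := WithTop.ne_top_iff_exists.mp hc
  rw [WithTop.untopD_coe, WithTop.coe_le_coe]

lemma coe_eq_iff_eq_untopD {a : ℝ} {c : WithTop ℝ} (hc : c ≠ ⊤) :
    (a : WithTop ℝ) = c ↔ a = c.untopD 0 := by
  obtain ⟨r, rfl⟩ := WithTop.ne_top_iff_exists.mp hc
  rw [WithTop.untopD_coe, WithTop.coe_inj]

lemma exists_pos_forall_coe_add_mul_lt {ι : Type*} (s : Finset ι) (a b : ι → ℝ)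
    (c : ι → WithTop ℝ) (h : ∀ i ∈ s, (a i : WithTop ℝ) < c i) :
    ∃ t > 0, ∀ i ∈ s, ((a i + t * b i : ℝ) : WithTop ℝ) < c i := by
  have hev : ∀ᶠ t in nhdsWithin (0 : ℝ) (Set.Ioi 0),
      ∀ i ∈ s, ((a i + t * b i : ℝ) : WithTop ℝ) < c i := by
    rw [Filter.eventually_all_finset]
    intro i hi
    apply nhdsWithin_le_nhds
    have hai := h i hi
    revert hai
    induction c i using WithTop.recTopCoe with
    | top => exact fun _ => Filter.Eventually.of_forall fun _ => WithTop.coe_lt_top _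
    | coe r =>
      intro hai
      simp only [WithTop.coe_lt_coe] at hai ⊢
      have hcont : Continuous fun t : ℝ => a i + t * b i := by fun_prop
      exact (hcont.tendsto' 0 (a i) (by simp)).eventually_lt_const hai
  obtain ⟨t, ht, htpos⟩ := (hev.and self_mem_nhdsWithin).exists
  exact ⟨t, htpos, ht⟩

lemma sum_inter_eq_sum {I : Type*} [DecidableEq I] {x : I → ℝ} {C : Finset I}
    (hx : ∀ i ∉ C, x i = 0) (D : Finset I) : ∑ i ∈ D ∩ C, x i = ∑ i ∈ D, x i :=
  sum_subset inter_subset_left fun i hiD hi => hx i fun hiC => hi (mem_inter.mpr ⟨hiD, hiC⟩)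

section Corestriction

variable {I : Type*} [DecidableEq I] {z : Finset I → WithTop ℝ}

lemma coRes_of_eq_coe {A : Finset I} {r : ℝ} (hA : z A = r) (U : Finset I) :
    coRes z A U = z (A ∪ U) + ((-r : ℝ) : WithTop ℝ) := by
  rw [coRes, hA, WithTop.untopD_coe]

lemma coe_le_coRes_iff {A U : Finset I} (hA : z A ≠ ⊤) {a : ℝ} :
    (a : WithTop ℝ) ≤ coRes z A U ↔ a + z A ≤ z (A ∪ U) := by
  obtain ⟨r, hr⟩ := WithTop.ne_top_iff_exists.mp hA
  rw [coRes_of_eq_coe hr.symm, ← hr]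
  generalize z (A ∪ U) = c
  induction c using WithTop.recTopCoe with
  | top => simp only [top_add, le_top]
  | coe c =>
    rw [← WithTop.coe_add, ← WithTop.coe_add, WithTop.coe_le_coe, WithTop.coe_le_coe]
    constructor <;> intro h <;> linarith

lemma coe_eq_coRes_iff {A U : Finset I} (hA : z A ≠ ⊤) {a : ℝ} :
    (a : WithTop ℝ) = coRes z A U ↔ a + z A = z (A ∪ U) := by
  obtain ⟨r, hr⟩ := WithTop.ne_top_iff_exists.mp hA
  rw [coRes_of_eq_coe hr.symm, ← hr]
  generalize z (A ∪ U) = c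
  induction c using WithTop.recTopCoe with
  | top => simp only [top_add, ← WithTop.coe_add, WithTop.coe_ne_top]
  | coe c =>
    rw [← WithTop.coe_add, ← WithTop.coe_add, WithTop.coe_inj, WithTop.coe_inj]
    constructor <;> intro h <;> linarith

lemma coRes_split_iff {A U U₁ U₂ : Finset I} (hA : z A ≠ ⊤) :
    coRes z A U = coRes z A U₁ + coRes z A U₂ ↔
      z (A ∪ U) + z A = z (A ∪ U₁) + z (A ∪ U₂) := by
  obtain ⟨r, hr⟩ := WithTop.ne_top_iff_exists.mp hA
  simp only [coRes_of_eq_coe hr.symm, ← hr]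
  generalize z (A ∪ U) = c
  generalize z (A ∪ U₁) = c₁
  generalize z (A ∪ U₂) = c₂
  induction c using WithTop.recTopCoe <;> induction c₁ using WithTop.recTopCoe <;>
    induction c₂ using WithTop.recTopCoe <;>
    simp only [top_add, add_top, ← WithTop.coe_add, WithTop.coe_ne_top, WithTop.top_ne_coe,
      WithTop.coe_inj]
  constructor <;> intro h <;> linarith

lemma coRes_empty {A : Finset I} (hA : z A ≠ ⊤) : coRes z A ∅ = 0 := by
  rw [← WithTop.coe_zero, eq_comm, coe_eq_coRes_iff hA, union_empty, WithTop.coe_zero, zero_add]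

lemma coRes_ne_top {A U : Finset I} (h : z (A ∪ U) ≠ ⊤) : coRes z A U ≠ ⊤ :=
  WithTop.add_ne_top.mpr ⟨h, WithTop.coe_ne_top⟩

lemma Submodular.coRes (hsub : Submodular z) (A : Finset I) : Submodular (coRes z A) := by
  intro S T
  have h := hsub (A ∪ S) (A ∪ T)
  rw [← union_union_distrib_left, ← union_inter_distrib_left] at h
  simp only [_root_.coRes]
  calc z (A ∪ (S ∪ T)) + _ + (z (A ∪ (S ∩ T)) + _)
      = z (A ∪ (S ∪ T)) + z (A ∪ (S ∩ T)) + (_ + _) := add_add_add_comm _ _ _ _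
    _ ≤ z (A ∪ S) + z (A ∪ T) + (_ + _) := by gcongr
    _ = _ := add_add_add_comm _ _ _ _

lemma Submodular.inter_right (hsub : Submodular z) (C : Finset I) :
    Submodular fun U => z (U ∩ C) := by
  intro S T
  have h := hsub (S ∩ C) (T ∩ C)
  rwa [← Finset.union_inter_distrib_right, ← Finset.inter_inter_distrib_right] at h

end Corestriction

section Polyhedron

variable {I : Type*} {z : Finset I → WithTop ℝ}

def SubmodularPolyhedron (z : Finset I → WithTop ℝ) : Set (I → ℝ) :=
  {x | ∀ A : Finset I, ((∑ i ∈ A, x i : ℝ) : WithTop ℝ) ≤ z A}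

def Tight (z : Finset I → WithTop ℝ) (x : I → ℝ) (A : Finset I) : Prop :=
  ((∑ i ∈ A, x i : ℝ) : WithTop ℝ) = z A

lemma Tight.ne_top {x : I → ℝ} {A : Finset I} (h : Tight z x A) : z A ≠ ⊤ :=
  h ▸ WithTop.coe_ne_top

lemma tight_empty (hz0 : z ∅ = 0) (x : I → ℝ) : Tight z x ∅ := by
  rw [Tight, sum_empty, hz0, WithTop.coe_zero]

lemma tight_and_tight_of_add_le {x : I → ℝ} (hx : x ∈ SubmodularPolyhedron z) {S T : Finset I}
    (h : z S + z T ≤ ((∑ i ∈ S, x i : ℝ) : WithTop ℝ) + ((∑ i ∈ T, x i : ℝ) : WithTop ℝ)) :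
    Tight z x S ∧ Tight z x T :=
  (coe_eq_and_coe_eq_of_add_le (hx S) (hx T) h).imp Eq.symm Eq.symm

lemma exists_mem_submodularPolyhedron [Fintype I] (hz0 : z ∅ = 0) :
    ∃ x, x ∈ SubmodularPolyhedron z := by
  set M : ℝ := ∑ U : Finset I, |(z U).untopD 0|
  refine ⟨fun _ => -M, fun U => ?_⟩
  rcases U.eq_empty_or_nonempty with rfl | hU
  · rw [sum_empty, hz0, WithTop.coe_zero]
  induction hzU : z U using WithTop.recTopCoe with
  | top => exact le_top
  | coe u =>
    have huM : |u| ≤ M := by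
      simpa [hzU] using single_le_sum (f := fun U => |(z U).untopD 0|)
        (fun _ _ => abs_nonneg _) (mem_univ U)
    have hM : 0 ≤ M := (abs_nonneg u).trans huM
    have hcard : (1 : ℝ) ≤ U.card := by exact_mod_cast hU.card_pos
    rw [WithTop.coe_le_coe, sum_const, nsmul_eq_mul]
    nlinarith [neg_abs_le u]

variable [DecidableEq I]

lemma sum_add_single (x : I → ℝ) (a : I) (δ : ℝ) (U : Finset I) :
    ∑ i ∈ U, (x + Pi.single a δ : I → ℝ) i = ∑ i ∈ U, x i + if a ∈ U then δ else 0 := by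
  simp only [Pi.add_apply, sum_add_distrib, sum_pi_single']

lemma Tight.union_inter (hsub : Submodular z) {x : I → ℝ} (hx : x ∈ SubmodularPolyhedron z)
    {A B : Finset I} (hA : Tight z x A) (hB : Tight z x B) :
    Tight z x (A ∪ B) ∧ Tight z x (A ∩ B) := by
  apply tight_and_tight_of_add_le hx
  rw [← WithTop.coe_add, sum_union_inter, WithTop.coe_add, hA, hB]
  exact hsub A B

lemma tight_sup (hsub : Submodular z) (hz0 : z ∅ = 0) {x : I → ℝ}
    (hx : x ∈ SubmodularPolyhedron z) {ι : Type*} {s : Finset ι} {T : ι → Finset I}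
    (hT : ∀ i ∈ s, Tight z x (T i)) : Tight z x (s.sup T) :=
  Finset.sup_induction (tight_empty hz0 x) (fun _ h _ h' => (h.union_inter hsub hx h').1) hT

variable [Fintype I]

lemma tight_inf (hsub : Submodular z) {x : I → ℝ} (hx : x ∈ EGP z) {ι : Type*}
    {s : Finset ι} {T : ι → Finset I} (hT : ∀ i ∈ s, Tight z x (T i)) : Tight z x (s.inf T) :=
  Finset.inf_induction hx.1 (fun _ h _ h' => (h.union_inter hsub hx.2 h').2) hT

lemma exists_raise_into_tight_set (hzI : z univ ≠ ⊤) {x : I → ℝ}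
    (hx : x ∈ SubmodularPolyhedron z) (a : I) :
    ∃ x' ∈ SubmodularPolyhedron z, (∃ T, Tight z x' T ∧ a ∈ T) ∧
      ∀ T, Tight z x T → a ∉ T → Tight z x' T := by
  set 𝒰 := univ.filter fun U : Finset I => a ∈ U ∧ z U ≠ ⊤
  obtain ⟨U₀, hU₀, hmin⟩ := 𝒰.exists_min_image (fun U => (z U).untopD 0 - ∑ i ∈ U, x i)
    ⟨univ, by simp [𝒰, hzI]⟩
  simp only [𝒰, mem_filter, mem_univ, true_and] at hU₀ hmin
  obtain ⟨u₀, hu₀⟩ := WithTop.ne_top_iff_exists.mp hU₀.2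
  refine ⟨x + Pi.single a ((z U₀).untopD 0 - ∑ i ∈ U₀, x i : ℝ), fun U => ?_, ⟨U₀, ?_, hU₀.1⟩,
    fun T hT haT => ?_⟩
  · rw [sum_add_single]
    split_ifs with haU
    · induction hzU : z U using WithTop.recTopCoe with
      | top => exact le_top
      | coe u =>
        have hU := hmin U ⟨haU, hzU ▸ WithTop.coe_ne_top⟩
        rw [hzU, ← hu₀, WithTop.untopD_coe, WithTop.untopD_coe] at hU
        rw [← hu₀, WithTop.untopD_coe, WithTop.coe_le_coe]
        linarith
    · simpa using hx U
  · rw [Tight, sum_add_single, if_pos hU₀.1, ← hu₀, WithTop.untopD_coe, add_sub_cancel]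
  · rwa [Tight, sum_add_single, if_neg haT, add_zero]

lemma exists_tight_cover (hz0 : z ∅ = 0) (hzI : z univ ≠ ⊤) (S : Finset I) :
    ∃ x ∈ SubmodularPolyhedron z, ∀ i ∈ S, ∃ T, Tight z x T ∧ i ∈ T := by
  induction S using Finset.induction_on with
  | empty =>
    obtain ⟨x, hx⟩ := exists_mem_submodularPolyhedron hz0
    exact ⟨x, hx, by simp⟩
  | insert a S _ ih =>
    obtain ⟨x, hx, hcover⟩ := ih
    by_cases ha : ∃ T, Tight z x T ∧ a ∈ T
    · exact ⟨x, hx, by simpa [ha] using hcover⟩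
    push Not at ha
    obtain ⟨x', hx', ha', hkeep⟩ := exists_raise_into_tight_set hzI hx a
    refine ⟨x', hx', fun i hi => ?_⟩
    rcases mem_insert.mp hi with rfl | hi
    · exact ha'
    obtain ⟨T, hT, hiT⟩ := hcover i hi
    exact ⟨T, hkeep T hT (ha T hT), hiT⟩

theorem egp_nonempty (hsub : Submodular z) (hz0 : z ∅ = 0) (hzI : z univ ≠ ⊤) :
    (EGP z).Nonempty := by
  obtain ⟨x, hx, hcover⟩ := exists_tight_cover hz0 hzI univ
  choose T hT hiT using fun i => hcover i (mem_univ i)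
  have hsup : univ.sup T = univ := eq_univ_of_forall fun i => mem_sup.mpr ⟨i, mem_univ i, hiT i⟩
  exact ⟨x, hsup ▸ tight_sup hsub hz0 hx fun i _ => hT i, hx⟩

end Polyhedron

section Exchange

variable {I : Type*} [Fintype I] [DecidableEq I] {z : Finset I → WithTop ℝ}

lemma exists_exchange {x : I → ℝ} (hx : x ∈ EGP z) {i s : I}
    (h : ∀ T, Tight z x T → i ∈ T → s ∈ T) :
    ∃ ε > 0, x + Pi.single i ε - Pi.single s ε ∈ EGP z := by
  have hsum : ∀ (ε : ℝ) (U : Finset I), ∑ j ∈ U, (x + Pi.single i ε - Pi.single s ε : I → ℝ) j =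
      ∑ j ∈ U, x j + (if i ∈ U then ε else 0) - if s ∈ U then ε else 0 := by
    intro ε U
    simp only [Pi.add_apply, Pi.sub_apply, sum_add_distrib, sum_sub_distrib, sum_pi_single']
  have hslack : ∀ U ∈ univ.filter fun U : Finset I => i ∈ U ∧ s ∉ U,
      ((∑ j ∈ U, x j : ℝ) : WithTop ℝ) < z U := by
    simp only [mem_filter, mem_univ, true_and]
    exact fun U ⟨hiU, hsU⟩ => (hx.2 U).lt_of_ne fun hU => hsU (h U hU hiU)
  obtain ⟨ε, hε, hlt⟩ := exists_pos_forall_coe_add_mul_lt _ _ (fun _ => 1) z hslack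
  refine ⟨ε, hε, ?_, fun U => ?_⟩
  · rw [hsum, if_pos (mem_univ i), if_pos (mem_univ s), add_sub_cancel_right]
    exact hx.1
  · rw [hsum]
    by_cases hiU : i ∈ U <;> by_cases hsU : s ∈ U <;>
      simp only [hiU, hsU, if_true, if_false, add_zero, sub_zero, add_sub_cancel_right]
    · exact hx.2 U
    · simpa using (hlt U (by simp [hiU, hsU])).le
    · exact le_trans (WithTop.coe_le_coe.mpr (by linarith)) (hx.2 U)
    · exact hx.2 U

lemma tight_of_forall_sum_eq (hsub : Submodular z) (hz0 : z ∅ = 0) {S : Finset I}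
    (hconst : ∀ x ∈ EGP z, ∀ y ∈ EGP z, ∑ i ∈ S, x i = ∑ i ∈ S, y i) {x : I → ℝ}
    (hx : x ∈ EGP z) : Tight z x S := by
  -- otherwise an exchange from some `s ∉ S` to some `i ∈ S` would change `x_S`
  have hsep : ∀ i ∈ S, ∀ s ∉ S, ∃ T, Tight z x T ∧ i ∈ T ∧ s ∉ T := by
    intro i hi s hs
    by_contra! h
    obtain ⟨ε, hε, hx'⟩ := exists_exchange hx h
    have := hconst _ hx' x hx
    simp only [Pi.add_apply, Pi.sub_apply, sum_add_distrib, sum_sub_distrib, sum_pi_single',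
      if_pos hi, if_neg hs] at this
    linarith
  choose! T hT using hsep
  have hS : S = S.sup fun i => Sᶜ.inf (T i) := by
    ext j
    simp only [mem_sup, mem_inf, mem_compl]
    refine ⟨fun hj => ⟨j, hj, fun s hs => (hT j hj s hs).2.1⟩, fun ⟨i, hi, hj⟩ => ?_⟩
    by_contra hjS
    exact (hT i hi j hjS).2.2 (hj j hjS)
  rw [hS]
  exact tight_sup hsub hz0 hx.2 fun i hi =>
    tight_inf hsub hx fun s hs => (hT i hi s (mem_compl.mp hs)).1

theorem eq_add_of_forall_sum_eq (hsub : Submodular z) (hz0 : z ∅ = 0) (hzI : z univ ≠ ⊤)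
    {S : Finset I} (hconst : ∀ x ∈ EGP z, ∀ y ∈ EGP z, ∑ i ∈ S, x i = ∑ i ∈ S, y i)
    (E : Finset I) : z E = z (E ∩ S) + z (E \ S) := by
  have hconstc : ∀ x ∈ EGP z, ∀ y ∈ EGP z, ∑ i ∈ Sᶜ, x i = ∑ i ∈ Sᶜ, y i := by
    intro x hx y hy
    have htot : ∑ i, x i = ∑ i, y i := WithTop.coe_inj.mp (hx.1.trans hy.1.symm)
    rw [← sum_compl_add_sum S, ← sum_compl_add_sum S] at htot
    linarith [hconst x hx y hy]
  obtain ⟨x, hx⟩ := egp_nonempty hsub hz0 hzI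
  have hmod : z S + z Sᶜ = z univ := by
    rw [← tight_of_forall_sum_eq hsub hz0 hconst hx,
      ← tight_of_forall_sum_eq hsub hz0 hconstc hx, ← WithTop.coe_add, sum_add_sum_compl]
    exact hx.1
  apply le_antisymm
  · have h := hsub (E ∩ S) (E \ S)
    rwa [show E ∩ S ∪ E \ S = E by grind, show E ∩ S ∩ (E \ S) = ∅ by grind, hz0,
      add_zero] at h
  · rw [← WithTop.add_le_add_iff_right hzI]
    have h₁ := hsub E S
    have h₂ := hsub (E ∪ S) Sᶜ
    rw [show E ∪ S ∪ Sᶜ = univ by grind [mem_compl],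
      show (E ∪ S) ∩ Sᶜ = E \ S by grind [mem_compl]] at h₂
    calc z (E ∩ S) + z (E \ S) + z univ = z (E ∩ S) + (z univ + z (E \ S)) := by abel
      _ ≤ z (E ∩ S) + (z (E ∪ S) + z Sᶜ) := by gcongr
      _ = (z (E ∪ S) + z (E ∩ S)) + z Sᶜ := by abel
      _ ≤ (z E + z S) + z Sᶜ := by gcongr
      _ = z E + z univ := by rw [add_assoc, hmod]

lemma apply_eq_zero_of_mem_egp_inter {w : Finset I → WithTop ℝ} (hw0 : w ∅ = 0) {C : Finset I}
    {x : I → ℝ} (hx : x ∈ EGP fun U => w (U ∩ C)) {i : I} (hi : i ∉ C) : x i = 0 := by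
  have hle : x i ≤ 0 := by
    simpa [singleton_inter_of_notMem hi, hw0] using hx.2 {i}
  have hge : ∑ j ∈ univ.erase i, x j ≤ ∑ j, x j := by
    have h : ((∑ j ∈ univ.erase i, x j : ℝ) : WithTop ℝ) ≤ w (univ.erase i ∩ C) := hx.2 _
    have htot : ((∑ j, x j : ℝ) : WithTop ℝ) = w (univ ∩ C) := hx.1
    rwa [show univ.erase i ∩ C = univ ∩ C by grind, ← htot, WithTop.coe_le_coe] at h
  rw [← add_sum_erase univ x (mem_univ i)] at hge
  linarith

lemma egp_coRes_inter_nonempty (hsub : Submodular z) {A C : Finset I} (hA : z A ≠ ⊤)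
    (hAC : z (A ∪ C) ≠ ⊤) : (EGP fun U => coRes z A (U ∩ C)).Nonempty :=
  egp_nonempty ((hsub.coRes A).inter_right C) (by rw [empty_inter, coRes_empty hA])
    (by rw [univ_inter]; exact coRes_ne_top hAC)

end Exchange

section Uncrossing

variable {I : Type*} [DecidableEq I] {z : Finset I → WithTop ℝ}

theorem Submodular.add_eq_add_of_modular (hsub : Submodular z) {A C₁ C₂ U : Finset I}
    (hC : Disjoint C₁ C₂) (hfin : z (A ∪ C₁ ∪ C₂) ≠ ⊤)
    (hmod : z (A ∪ C₁) + z (A ∪ C₂) = z A + z (A ∪ C₁ ∪ C₂)) (hU : U ⊆ C₁ ∪ C₂) :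
    z (A ∪ U) + z A = z (A ∪ U ∩ C₁) + z (A ∪ U ∩ C₂) := by
  have hC' := disjoint_left.mp hC
  apply le_antisymm
  · have h := hsub (A ∪ U ∩ C₁) (A ∪ U ∩ C₂)
    rwa [show A ∪ U ∩ C₁ ∪ (A ∪ U ∩ C₂) = A ∪ U by grind,
      show (A ∪ U ∩ C₁) ∩ (A ∪ U ∩ C₂) = A by grind] at h
  · rw [← WithTop.add_le_add_iff_right hfin]
    have h₂ := hsub (A ∪ U) (A ∪ C₂)
    have h₃ := hsub (A ∪ U ∩ C₁ ∪ C₂) (A ∪ C₁)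
    rw [show A ∪ U ∪ (A ∪ C₂) = A ∪ U ∩ C₁ ∪ C₂ by grind,
      show (A ∪ U) ∩ (A ∪ C₂) = A ∪ U ∩ C₂ by grind] at h₂
    rw [show A ∪ U ∩ C₁ ∪ C₂ ∪ (A ∪ C₁) = A ∪ C₁ ∪ C₂ by grind,
      show (A ∪ U ∩ C₁ ∪ C₂) ∩ (A ∪ C₁) = A ∪ U ∩ C₁ by grind] at h₃
    calc z (A ∪ U) + z A + z (A ∪ C₁ ∪ C₂)
        = z (A ∪ U) + (z (A ∪ C₁) + z (A ∪ C₂)) := by rw [hmod]; abel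
      _ = z (A ∪ U) + z (A ∪ C₂) + z (A ∪ C₁) := by abel
      _ ≥ z (A ∪ U ∩ C₁ ∪ C₂) + z (A ∪ U ∩ C₂) + z (A ∪ C₁) := by gcongr
      _ = z (A ∪ U ∩ C₁ ∪ C₂) + z (A ∪ C₁) + z (A ∪ U ∩ C₂) := by abel
      _ ≥ z (A ∪ C₁ ∪ C₂) + z (A ∪ U ∩ C₁) + z (A ∪ U ∩ C₂) := by gcongr
      _ = z (A ∪ U ∩ C₁) + z (A ∪ U ∩ C₂) + z (A ∪ C₁ ∪ C₂) := by abel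

theorem coRes_split_of_tight (hsub : Submodular z) {x : I → ℝ} {A C₁ C₂ : Finset I}
    (hC : Disjoint C₁ C₂) (h₀ : Tight z x A) (h₁ : Tight z x (A ∪ C₁))
    (h₂ : Tight z x (A ∪ C₂)) (h₁₂ : Tight z x (A ∪ C₁ ∪ C₂)) :
    ∀ U ⊆ C₁ ∪ C₂, coRes z A U = coRes z A (U ∩ C₁) + coRes z A (U ∩ C₂) := by
  intro U hU
  rw [coRes_split_iff h₀.ne_top]
  refine hsub.add_eq_add_of_modular hC h₁₂.ne_top ?_ hU
  have hC' := disjoint_left.mp hC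
  rw [← h₀, ← h₁, ← h₂, ← h₁₂, ← WithTop.coe_add, ← WithTop.coe_add, ← sum_union_inter,
    show A ∪ C₁ ∪ (A ∪ C₂) = A ∪ C₁ ∪ C₂ by grind, show (A ∪ C₁) ∩ (A ∪ C₂) = A by grind,
    add_comm]

end Uncrossing

namespace Preo

variable {X : Type*} {P : Preo X}

theorem ext {Q : Preo X} (h : ∀ a b, P.le a b ↔ Q.le a b) : P = Q := by
  obtain ⟨le, _, _⟩ := P
  obtain ⟨le', _, _⟩ := Q
  obtain rfl : le = le' := funext₂ fun a b => propext (h a b)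
  rfl

lemma isDownset_empty : P.IsDownset ∅ := fun _ _ hy => absurd hy (notMem_empty _)

lemma exists_minimal {s : Finset X} (hs : s.Nonempty) :
    ∃ a ∈ s, ∀ b ∈ s, P.le b a → P.le a b := by
  let _ : LE X := ⟨P.le⟩
  have : IsTrans X fun a b => b ≤ a := ⟨fun _ _ _ h h' => P.le_trans h' h⟩
  obtain ⟨a, ha, hmin⟩ := s.exists_minimal hs
  exact ⟨a, ha, fun b hb => hmin hb⟩

section Fintype

variable [Fintype X]

lemma isDownset_univ : P.IsDownset univ := fun _ _ _ _ => mem_univ _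

lemma mem_bubble {a x : X} : x ∈ P.bubble a ↔ P.le a x ∧ P.le x a := by
  simp [bubble]

lemma self_mem_bubble (a : X) : a ∈ P.bubble a := mem_bubble.mpr ⟨P.le_refl a, P.le_refl a⟩

lemma convexF_bubble (a : X) : P.ConvexF (P.bubble a) := by
  intro x y w hx hy hxw hwy
  rw [mem_bubble] at hx hy ⊢
  exact ⟨P.le_trans hx.1 hxw, P.le_trans hwy hy.2⟩

lemma IsDownset.disjoint_or_bubble_subset {D : Finset X} (hD : P.IsDownset D) (a : X) :
    Disjoint D (P.bubble a) ∨ P.bubble a ⊆ D := by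
  refine or_iff_not_imp_left.mpr fun h => ?_
  obtain ⟨d, hdD, hda⟩ := not_disjoint_iff.mp h
  exact fun c hc => hD hdD (P.le_trans (mem_bubble.mp hc).2 (mem_bubble.mp hda).1)

lemma mem_downClosure {C : Finset X} {x : X} : x ∈ P.downClosure C ↔ ∃ y ∈ C, P.le x y := by
  simp [downClosure]

lemma subset_downClosure (C : Finset X) : C ⊆ P.downClosure C :=
  fun x hx => mem_downClosure.mpr ⟨x, hx, P.le_refl x⟩

lemma isDownset_downClosure (C : Finset X) : P.IsDownset (P.downClosure C) := by
  intro x y hy hxy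
  obtain ⟨c, hc, hyc⟩ := mem_downClosure.mp hy
  exact mem_downClosure.mpr ⟨c, hc, P.le_trans hxy hyc⟩

lemma preOfFam_setOf_isDownset (P : Preo X) : preOfFam {A | P.IsDownset A} = P := by
  refine ext fun a b => ⟨fun h => ?_, fun h A hA hb => hA hb h⟩
  have hIic : P.IsDownset (univ.filter (P.le · b)) := by
    intro x y hy hxy
    simp only [mem_filter, mem_univ, true_and] at hy ⊢
    exact P.le_trans hxy hy
  simpa using h _ hIic (by simpa using P.le_refl b)

lemma exists_le_of_not_isDownset {As : Finset X}
    (hsat : ∀ ⦃a b⦄, P.le a b → P.le b a → b ∈ As → a ∈ As) (hnd : ¬ P.IsDownset As) :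
    ∃ a b, P.le a b ∧ a ∉ As ∧ b ∈ As ∧
      ∀ ⦃x y⦄, P.le a x → P.le x y → P.le y b → x ∈ As → y ∈ As := by
  simp only [IsDownset, not_forall] at hnd
  obtain ⟨a, b₀, hb₀, hab₀, ha⟩ := hnd
  obtain ⟨b, hb, hbmin⟩ := P.exists_minimal (s := univ.filter fun m => m ∈ As ∧ P.le a m)
    ⟨b₀, by simp [hb₀, hab₀]⟩
  simp only [mem_filter, mem_univ, true_and] at hb hbmin
  exact ⟨a, b, hb.2, ha, hb.1, fun x y hax hxy hyb hx =>
    hsat hyb (P.le_trans (hbmin x ⟨hx, hax⟩ (P.le_trans hxy hyb)) hxy) hb.1⟩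

end Fintype

variable [DecidableEq X] {A B D : Finset X}

lemma IsDownset.union (hA : P.IsDownset A) (hB : P.IsDownset B) : P.IsDownset (A ∪ B) := by
  intro x y hy hxy
  rcases mem_union.mp hy with hy | hy
  exacts [mem_union_left _ (hA hy hxy), mem_union_right _ (hB hy hxy)]

lemma IsDownset.inter (hA : P.IsDownset A) (hB : P.IsDownset B) : P.IsDownset (A ∩ B) :=
  fun _ _ hy hxy => mem_inter.mpr ⟨hA (mem_inter.mp hy).1 hxy, hB (mem_inter.mp hy).2 hxy⟩

lemma IsDownset.union_of_forall (hA : P.IsDownset A)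
    (hD : ∀ ⦃x y⦄, y ∈ D → P.le x y → x ∈ A ∨ x ∈ D) : P.IsDownset (A ∪ D) := by
  intro x y hy hxy
  rcases mem_union.mp hy with hy | hy
  · exact mem_union_left _ (hA hy hxy)
  · exact mem_union.mpr (hD hy hxy)

lemma IsDownset.union_of_incomparable {C₁ C₂ : Finset X} (hA : P.IsDownset A)
    (hB : P.IsDownset B) (hC : C₁ ∪ C₂ = B \ A) (hinc : ∀ x ∈ C₂, ∀ y ∈ C₁, ¬ P.le x y) :
    P.IsDownset (A ∪ C₁) := by
  refine hA.union_of_forall fun x y hy hxy => ?_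
  have hyB : y ∈ B := (mem_sdiff.mp (hC ▸ mem_union_left C₂ hy)).1
  by_cases hxA : x ∈ A
  · exact Or.inl hxA
  rcases mem_union.mp (hC ▸ mem_sdiff.mpr ⟨hB hyB hxy, hxA⟩ : x ∈ C₁ ∪ C₂) with hx | hx
  exacts [Or.inr hx, absurd hxy (hinc x hx y hy)]

variable [Fintype X]

lemma isDownset_downClosure_sdiff {C : Finset X} (hC : P.ConvexF C) :
    P.IsDownset (P.downClosure C \ C) := by
  intro x y hy hxy
  obtain ⟨hyC', hyC⟩ := mem_sdiff.mp hy
  obtain ⟨c, hc, hyc⟩ := mem_downClosure.mp hyC'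
  exact mem_sdiff.mpr ⟨P.isDownset_downClosure C hyC' hxy, fun hx => hyC (hC hx hc hxy hyc)⟩

lemma downClosure_sdiff_union (C : Finset X) : P.downClosure C \ C ∪ C = P.downClosure C :=
  sdiff_union_of_subset (P.subset_downClosure C)

lemma isDownset_downClosure_sdiff_union {C : Finset X} :
    P.IsDownset (P.downClosure C \ C ∪ C) := by
  rw [downClosure_sdiff_union]
  exact P.isDownset_downClosure C

lemma exists_bubble_of_ssubset {A' : Finset X} (hA : P.IsDownset A) (hA' : P.IsDownset A')
    (hAA' : A ⊂ A') :
    ∃ a, A ⊂ A ∪ P.bubble a ∧ A ∪ P.bubble a ⊆ A' ∧ P.IsDownset (A ∪ P.bubble a) := by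
  obtain ⟨a, ha, hmin⟩ := P.exists_minimal (sdiff_nonempty.mpr (not_subset_of_ssubset hAA'))
  obtain ⟨haA', haA⟩ := mem_sdiff.mp ha
  refine ⟨a, (ssubset_iff_of_subset subset_union_left).mpr
    ⟨a, mem_union_right _ (P.self_mem_bubble a), haA⟩, union_subset hAA'.subset
    fun c hc => hA' haA' (mem_bubble.mp hc).2, hA.union_of_forall fun x y hy hxy => ?_⟩
  have hxa := P.le_trans hxy (mem_bubble.mp hy).2
  by_cases hxA : x ∈ A
  · exact Or.inl hxA
  · exact Or.inr (mem_bubble.mpr ⟨hmin x (mem_sdiff.mpr ⟨hA' haA' hxa, hxA⟩) hxa, hxa⟩)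

lemma isDownset_preOfFam_iff {F : Set (Finset X)} (hF : IsTopologyFam F) :
    (preOfFam F).IsDownset A ↔ A ∈ F := by
  obtain ⟨hempty, huniv, hunion, hinter⟩ := hF
  refine ⟨fun hA => ?_, fun hA x y hy hxy => hxy A hA hy⟩
  have hA' : A = A.sup fun b => (univ.filter fun O => O ∈ F ∧ b ∈ O).inf id := by
    ext x
    simp only [mem_sup, mem_inf, mem_filter, mem_univ, true_and, id]
    exact ⟨fun hx => ⟨x, hx, fun O hO => hO.2⟩, fun ⟨b, hb, hxb⟩ =>
      hA hb fun O hO hbO => hxb O ⟨hO, hbO⟩⟩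
  rw [hA']
  exact sup_induction hempty hunion fun b _ =>
    inf_induction huniv hinter fun O hO => (mem_filter.mp hO).2.1

end Preo

section Nonempty

variable {I : Type*} {z : Finset I → WithTop ℝ} {P : Preo I}

def PhiOn (z : Finset I → WithTop ℝ) (P : Preo I) (A : Finset I) : Set (I → ℝ) :=
  {x | (∀ i ∉ A, x i = 0) ∧ (∀ E ⊆ A, ((∑ i ∈ E, x i : ℝ) : WithTop ℝ) ≤ z E) ∧
    ∀ D, P.IsDownset D → D ⊆ A → Tight z x D}

lemma zero_mem_phiOn_empty (hz0 : z ∅ = 0) : (0 : I → ℝ) ∈ PhiOn z P ∅ := by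
  refine ⟨fun _ _ => rfl, fun E hE => ?_, fun D _ hD => ?_⟩
  · rw [subset_empty.mp hE, sum_empty, hz0, WithTop.coe_zero]
  · rw [subset_empty.mp hD]
    exact tight_empty hz0 0

lemma mem_phi_of_mem_phiOn_univ [Fintype I] {x : I → ℝ} (hx : x ∈ PhiOn z P univ) :
    x ∈ Phi z P :=
  ⟨⟨hx.2.2 univ Preo.isDownset_univ subset_rfl, fun E => hx.2.1 E (subset_univ E)⟩,
    fun D hD => hx.2.2 D hD (subset_univ D)⟩

variable [DecidableEq I]

lemma Compatible.modular (hc : Compatible z P) {D E : Finset I} (hD : P.IsDownset D)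
    (hE : P.IsDownset E) : z (D ∪ E) + z (D ∩ E) = z D + z E := by
  have h := hc.2 (D ∩ E) (D ∪ E) (hD.inter hE) (hD.union hE) inter_subset_union (D \ E) (E \ D)
    disjoint_sdiff_sdiff (by grind)
    (fun x hx y hy => ⟨fun hxy => (mem_sdiff.mp hx).2 (hE (mem_sdiff.mp hy).1 hxy),
      fun hyx => (mem_sdiff.mp hy).2 (hD (mem_sdiff.mp hx).1 hyx)⟩) _ subset_rfl
  rwa [coRes_split_iff (hc.1 _ (hD.inter hE)), show D ∩ E ∪ (D ∪ E) \ (D ∩ E) = D ∪ E by grind,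
    show D ∩ E ∪ (D ∪ E) \ (D ∩ E) ∩ (D \ E) = D by grind,
    show D ∩ E ∪ (D ∪ E) \ (D ∩ E) ∩ (E \ D) = E by grind] at h

variable [Fintype I]

lemma add_mem_phiOn_union_bubble (hsub : Submodular z) (hc : Compatible z P) {A : Finset I}
    (hA : P.IsDownset A) {a : I} {x y : I → ℝ} (hx : x ∈ PhiOn z P A)
    (hy : y ∈ EGP fun U => coRes z A (U ∩ P.bubble a)) :
    x + y ∈ PhiOn z P (A ∪ P.bubble a) := by
  set C := P.bubble a
  have hzA := hc.1 A hA
  have hysupp : ∀ i ∉ C, y i = 0 :=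
    fun i => apply_eq_zero_of_mem_egp_inter (coRes_empty hzA) hy
  have hsum : ∀ E, ∑ i ∈ E, (x + y) i = ∑ i ∈ E ∩ A, x i + ∑ i ∈ E ∩ C, y i := fun E => by
    rw [sum_inter_eq_sum hx.1, sum_inter_eq_sum hysupp, ← sum_add_distrib]
    rfl
  refine ⟨fun i hi => ?_, fun E hE => ?_, fun D hD hDAC => ?_⟩
  · rw [Pi.add_apply, hx.1 i fun h => hi (mem_union_left _ h),
      hysupp i fun h => hi (mem_union_right _ h), add_zero]
  · have hxE : ((∑ i ∈ E ∩ A, x i : ℝ) : WithTop ℝ) ≤ z (A ∩ E) :=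
      inter_comm E A ▸ hx.2.1 _ inter_subset_right
    have hyE : ((∑ i ∈ E ∩ C, y i : ℝ) : WithTop ℝ) + z A ≤ z (A ∪ E) := by
      rw [show A ∪ E = A ∪ E ∩ C by grind, ← coe_le_coRes_iff hzA]
      simpa [inter_right_comm, inter_self] using hy.2 (E ∩ C)
    rw [hsum, ← WithTop.add_le_add_iff_right hzA]
    calc ((∑ i ∈ E ∩ A, x i + ∑ i ∈ E ∩ C, y i : ℝ) : WithTop ℝ) + z A
        = (∑ i ∈ E ∩ A, x i : ℝ) + (((∑ i ∈ E ∩ C, y i : ℝ) : WithTop ℝ) + z A) := by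
          rw [WithTop.coe_add, add_assoc]
      _ ≤ z (A ∩ E) + z (A ∪ E) := add_le_add hxE hyE
      _ ≤ z E + z A := by rw [add_comm, add_comm (z E)]; exact hsub A E
  · rcases hD.disjoint_or_bubble_subset a with hDC | hCD
    · have hDA : D ⊆ A := fun i hi => (mem_union.mp (hDAC hi)).resolve_right
        (disjoint_left.mp hDC hi)
      rw [Tight, hsum, inter_eq_left.mpr hDA, disjoint_iff_inter_eq_empty.mp hDC, sum_empty,
        add_zero]
      exact hx.2.2 D hD hDA
    · have hyC : ((∑ i ∈ C, y i : ℝ) : WithTop ℝ) + z A = z (A ∪ C) := by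
        rw [← coe_eq_coRes_iff hzA, ← univ_inter C, sum_inter_eq_sum hysupp]
        exact hy.1
      have hmod := hc.modular hD hA
      rw [show D ∪ A = A ∪ C by grind] at hmod
      rw [Tight, hsum, inter_eq_right.mpr hCD, ← WithTop.add_right_inj hzA, WithTop.coe_add,
        add_assoc, hyC, hx.2.2 _ (hD.inter hA) inter_subset_right, add_comm, hmod]

theorem exists_add_mem_phiOn (hsub : Submodular z) (hc : Compatible z P) {A A' : Finset I}
    (hA : P.IsDownset A) (hA' : P.IsDownset A') (hAA' : A ⊆ A') :
    ∃ u, ∀ x ∈ PhiOn z P A, x + u ∈ PhiOn z P A' := by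
  rcases hAA'.eq_or_ssubset with rfl | hlt
  · exact ⟨0, fun x hx => by simpa using hx⟩
  obtain ⟨a, hlt', hsub', hdown⟩ := P.exists_bubble_of_ssubset hA hA' hlt
  obtain ⟨y, hy⟩ := egp_coRes_inter_nonempty hsub (hc.1 A hA) (hc.1 _ hdown)
  obtain ⟨u, hu⟩ := exists_add_mem_phiOn hsub hc hdown hA' hsub'
  refine ⟨y + u, fun x hx => ?_⟩
  rw [← add_assoc]
  exact hu _ (add_mem_phiOn_union_bubble hsub hc hA hx hy)
termination_by (A' \ A).card
decreasing_by
  rw [card_sdiff_of_subset hAA', card_sdiff_of_subset hsub']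
  have := card_lt_card hlt'
  have := card_le_card hsub'
  omega

theorem phi_nonempty (hsub : Submodular z) (hz0 : z ∅ = 0) (hc : Compatible z P) :
    (Phi z P).Nonempty := by
  obtain ⟨u, hu⟩ := exists_add_mem_phiOn hsub hc Preo.isDownset_empty Preo.isDownset_univ
    (empty_subset _)
  exact ⟨u, mem_phi_of_mem_phiOn_univ (by simpa using hu 0 (zero_mem_phiOn_empty hz0))⟩

end Nonempty

section Faces

variable {I : Type*} [Fintype I] {z : Finset I → WithTop ℝ}

def TightCut (z : Finset I → WithTop ℝ) (𝒜 : Set (Finset I)) : Set (I → ℝ) :=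
  {x | x ∈ EGP z ∧ ∀ A ∈ 𝒜, Tight z x A}

lemma convex_egp : Convex ℝ (EGP z) := by
  intro x hx y hy a b ha hb hab
  have hsum : ∀ A : Finset I, ∑ i ∈ A, (a • x + b • y) i = a * ∑ i ∈ A, x i + b * ∑ i ∈ A, y i :=
    fun A => by simp [sum_add_distrib, mul_sum]
  refine ⟨?_, fun A => ?_⟩
  · have h : ((∑ i, x i : ℝ) : WithTop ℝ) = ((∑ i, y i : ℝ) : WithTop ℝ) := hx.1.trans hy.1.symm
    rw [hsum, ← WithTop.coe_inj.mp h, ← add_mul, hab, one_mul]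
    exact hx.1
  · rw [hsum]
    induction hzA : z A using WithTop.recTopCoe with
    | top => exact le_top
    | coe u =>
      have hxA := hx.2 A
      have hyA := hy.2 A
      rw [hzA, WithTop.coe_le_coe] at hxA hyA
      rw [WithTop.coe_le_coe]
      have hu : a * u + b * u = u := by rw [← add_mul, hab, one_mul]
      linarith [mul_le_mul_of_nonneg_left hxA ha, mul_le_mul_of_nonneg_left hyA hb]

theorem isExposed_tightCut {𝒜 : Set (Finset I)} (h𝒜 : ∀ A ∈ 𝒜, z A ≠ ⊤) :
    IsExposed ℝ (EGP z) (TightCut z 𝒜) := by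
  rintro ⟨x₀, hx₀⟩
  let l : StrongDual ℝ (I → ℝ) :=
    ∑ A ∈ 𝒜.toFinset, ∑ i ∈ A, ContinuousLinearMap.proj (R := ℝ) (φ := fun _ : I => ℝ) i
  have hl : ∀ x, l x = ∑ A ∈ 𝒜.toFinset, ∑ i ∈ A, x i := fun x => by simp [l]
  have hle : ∀ x ∈ EGP z, ∀ A ∈ 𝒜.toFinset, ∑ i ∈ A, x i ≤ (z A).untopD 0 :=
    fun x hx A hA => (coe_le_iff_le_untopD (h𝒜 A (Set.mem_toFinset.mp hA))).mp (hx.2 A)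
  have hmax : ∀ x ∈ EGP z, l x ≤ ∑ A ∈ 𝒜.toFinset, (z A).untopD 0 :=
    fun x hx => (hl x).trans_le (sum_le_sum (hle x hx))
  have htight : ∀ x ∈ EGP z, x ∈ TightCut z 𝒜 ↔ l x = ∑ A ∈ 𝒜.toFinset, (z A).untopD 0 := by
    intro x hx
    rw [hl, sum_eq_sum_iff_of_le (hle x hx)]
    change (x ∈ EGP z ∧ ∀ A ∈ 𝒜, Tight z x A) ↔ _
    simp only [Set.mem_toFinset, Tight]
    exact (and_iff_right hx).trans (forall₂_congr fun A hA => coe_eq_iff_eq_untopD (h𝒜 A hA))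
  refine ⟨l, Set.ext fun x => ⟨fun hx => ⟨hx.1, fun y hy => ?_⟩, fun ⟨hx, hxmax⟩ => ?_⟩⟩
  · exact ((htight x hx.1).mp hx).symm ▸ hmax y hy
  · exact (htight x hx).mpr <| (hmax x hx).antisymm <|
      ((htight x₀ hx₀.1).mp hx₀).symm.le.trans (hxmax x₀ hx₀.1)

variable {G : Set (I → ℝ)}

lemma exists_forall_notMem_psiFam_lt (hG : G ⊆ EGP z) (hne : G.Nonempty)
    (hconv : Convex ℝ G) :
    ∃ y ∈ G, ∀ A ∉ PsiFam z G, ((∑ i ∈ A, y i : ℝ) : WithTop ℝ) < z A := by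
  have hone : ∀ A ∉ PsiFam z G, ∃ g ∈ G, ((∑ i ∈ A, g i : ℝ) : WithTop ℝ) < z A := by
    intro A hA
    by_contra! h
    obtain ⟨g, hg⟩ := hne
    exact hA ⟨fun htop => WithTop.coe_ne_top (top_le_iff.mp (htop ▸ h g hg)),
      fun g hg => ((hG hg).2 A).antisymm (h g hg)⟩
  have hmid : ∀ y g : I → ℝ, ∀ A : Finset I,
      ∑ i ∈ A, ((1 / 2 : ℝ) • y + (1 / 2 : ℝ) • g) i =
        1 / 2 * ∑ i ∈ A, y i + 1 / 2 * ∑ i ∈ A, g i := fun y g A => by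
    simp [sum_add_distrib, mul_sum]
  suffices h : ∀ s : Finset (Finset I), ∃ y ∈ G,
      ∀ A ∈ s, A ∉ PsiFam z G → ((∑ i ∈ A, y i : ℝ) : WithTop ℝ) < z A by
    obtain ⟨y, hy, hlt⟩ := h univ
    exact ⟨y, hy, fun A => hlt A (mem_univ A)⟩
  intro s
  induction s using Finset.induction_on with
  | empty =>
    obtain ⟨y, hy⟩ := hne
    exact ⟨y, hy, fun A hA => absurd hA (notMem_empty A)⟩
  | insert A s _ ih =>
    obtain ⟨y, hy, hys⟩ := ih
    by_cases hA : A ∈ PsiFam z G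
    · refine ⟨y, hy, fun B hB hBF => hys B ?_ hBF⟩
      rcases mem_insert.mp hB with rfl | hB
      exacts [absurd hA hBF, hB]
    obtain ⟨g, hg, hgA⟩ := hone A hA
    refine ⟨(1 / 2 : ℝ) • y + (1 / 2 : ℝ) • g, hconv hy hg (by norm_num) (by norm_num)
      (by norm_num), fun B hB hBF => ?_⟩
    rw [hmid]
    rcases mem_insert.mp hB with rfl | hB
    · exact coe_half_add_lt ((hG hy).2 B) hgA
    · rw [add_comm]
      exact coe_half_add_lt ((hG hg).2 B) (hys B hB hBF)

theorem tightCut_psiFam (hG : G ⊆ EGP z) (hexp : IsExposed ℝ (EGP z) G) (hne : G.Nonempty) :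
    TightCut z (PsiFam z G) = G := by
  refine Set.Subset.antisymm (fun x hx => ?_) fun g hg => ⟨hG hg, fun A hA => hA.2 g hg⟩
  -- moving from `x` beyond a relative interior point `y` of `G` stays in `Π(z)` for a while,
  -- so the exposing functional cannot be larger at `y` than at `x`
  obtain ⟨l, hl⟩ := hexp hne
  obtain ⟨y, hyG, hy⟩ := exists_forall_notMem_psiFam_lt hG hne (hexp.convex convex_egp)
  obtain ⟨t, ht, hlt⟩ := exists_pos_forall_coe_add_mul_lt (univ.filter (· ∉ PsiFam z G))
    (fun A => ∑ i ∈ A, y i) (fun A => ∑ i ∈ A, y i - ∑ i ∈ A, x i) z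
    (fun A hA => hy A (mem_filter.mp hA).2)
  set w := y + t • (y - x)
  have hw : ∀ A, ∑ i ∈ A, w i = ∑ i ∈ A, y i + t * (∑ i ∈ A, y i - ∑ i ∈ A, x i) :=
    fun A => by simp [w, sum_add_distrib, mul_sum, mul_sub]
  have hwE : w ∈ EGP z := by
    refine ⟨?_, fun A => ?_⟩
    · rw [hw, WithTop.coe_inj.mp (hx.1.1.trans (hG hyG).1.symm), sub_self, mul_zero, add_zero]
      exact (hG hyG).1
    · by_cases hA : A ∈ PsiFam z G
      · rw [hw, WithTop.coe_inj.mp ((hx.2 A hA).trans (hA.2 y hyG).symm), sub_self, mul_zero,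
          add_zero]
        exact (hG hyG).2 A
      · rw [hw]
        exact (hlt A (mem_filter.mpr ⟨mem_univ A, hA⟩)).le
  have hymax := (hl ▸ hyG).2
  have hlw : l w = l y + t * (l y - l x) := by simp [w, map_add, map_smul, map_sub]
  rw [hl]
  refine ⟨hx.1, fun v hv => (hymax v hv).trans ?_⟩
  nlinarith [hymax w hwE, hymax x hx.1]

end Faces

section PsiFam

variable {I : Type*} {z : Finset I → WithTop ℝ} {G : Set (I → ℝ)}

lemma mem_psiFam_of_forall_tight (hne : G.Nonempty) {A : Finset I}
    (h : ∀ x ∈ G, Tight z x A) : A ∈ PsiFam z G :=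
  ⟨(h _ hne.some_mem).ne_top, h⟩

variable [Fintype I] [DecidableEq I]

lemma mem_psiFam_of_add_le (hG : G ⊆ EGP z) (hne : G.Nonempty) {A B S T : Finset I}
    (hA : A ∈ PsiFam z G) (hB : B ∈ PsiFam z G) (hunion : S ∪ T = A ∪ B)
    (hinter : S ∩ T = A ∩ B) (h : z S + z T ≤ z A + z B) :
    S ∈ PsiFam z G ∧ T ∈ PsiFam z G := by
  have htight : ∀ x ∈ G, Tight z x S ∧ Tight z x T := fun x hx => by
    refine tight_and_tight_of_add_le (hG hx).2 ?_
    rwa [← WithTop.coe_add, ← sum_union_inter, hunion, hinter, sum_union_inter,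
      WithTop.coe_add, hA.2 x hx, hB.2 x hx]
  exact ⟨mem_psiFam_of_forall_tight hne fun x hx => (htight x hx).1,
    mem_psiFam_of_forall_tight hne fun x hx => (htight x hx).2⟩

lemma isTopologyFam_psiFam (hsub : Submodular z) (hz0 : z ∅ = 0) (hG : G ⊆ EGP z)
    (hne : G.Nonempty) : IsTopologyFam (PsiFam z G) := by
  have hunion_inter : ∀ A ∈ PsiFam z G, ∀ B ∈ PsiFam z G,
      A ∪ B ∈ PsiFam z G ∧ A ∩ B ∈ PsiFam z G := fun A hA B hB =>
    mem_psiFam_of_add_le hG hne hA hB (by grind) (by grind) (hsub A B)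
  exact ⟨mem_psiFam_of_forall_tight hne fun x _ => tight_empty hz0 x,
    mem_psiFam_of_forall_tight hne fun x hx => (hG hx).1,
    fun A hA B hB => (hunion_inter A hA B hB).1, fun A hA B hB => (hunion_inter A hA B hB).2⟩

lemma phi_preOfFam {F : Set (Finset I)} (hF : IsTopologyFam F) :
    Phi z (preOfFam F) = TightCut z F :=
  Set.ext fun _ => and_congr_right fun _ =>
    forall_congr' fun _ => imp_congr_left (Preo.isDownset_preOfFam_iff hF)

theorem phi_psiPre (hsub : Submodular z) (hz0 : z ∅ = 0) (hG : G ⊆ EGP z)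
    (hexp : IsExposed ℝ (EGP z) G) (hne : G.Nonempty) : Phi z (PsiPre z G) = G :=
  (phi_preOfFam (isTopologyFam_psiFam hsub hz0 hG hne)).trans (tightCut_psiFam hG hexp hne)

theorem compatible_psiPre (hsub : Submodular z) (hz0 : z ∅ = 0) (hG : G ⊆ EGP z)
    (hne : G.Nonempty) : Compatible z (PsiPre z G) := by
  have hdown := fun {A} => Preo.isDownset_preOfFam_iff (A := A)
    (isTopologyFam_psiFam hsub hz0 hG hne)
  refine ⟨fun A hA => (hdown.mp hA).1, fun A B hA hB _ C₁ C₂ hC hun hinc => ?_⟩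
  have hA₁ := hA.union_of_incomparable hB hun fun x hx y hy => (hinc y hy x hx).2
  have hA₂ := hA.union_of_incomparable hB ((union_comm C₂ C₁).trans hun)
    fun x hx y hy => (hinc x hx y hy).1
  have hB' : A ∪ C₁ ∪ C₂ = B := by
    rw [union_assoc, hun, union_sdiff_of_subset ‹A ⊆ B›]
  obtain ⟨g, hg⟩ := hne
  have htight := fun {D} (hD : (PsiPre z G).IsDownset D) => (hdown.mp hD).2 g hg
  intro U hU
  exact coRes_split_of_tight hsub hC (htight hA) (htight hA₁) (htight hA₂) (hB' ▸ htight hB) U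
    (hun ▸ hU)

theorem conforms_psiPre (hsub : Submodular z) (hz0 : z ∅ = 0) (hG : G ⊆ EGP z)
    (hne : G.Nonempty) : Conforms z (PsiPre z G) := by
  refine ⟨compatible_psiPre hsub hz0 hG hne, fun C hC C₁ C₂ hd hun hsplit x hx y hy => ?_⟩
  have hdown := fun {A} => Preo.isDownset_preOfFam_iff (A := A)
    (isTopologyFam_psiFam hsub hz0 hG hne)
  set Q := PsiPre z G
  set Am := Q.downClosure C \ C
  have hAm : Am ∈ PsiFam z G := hdown.mp (Q.isDownset_downClosure_sdiff hC)
  have hB : Am ∪ C ∈ PsiFam z G := hdown.mp Q.isDownset_downClosure_sdiff_union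
  have hmod : z (Am ∪ C₁) + z (Am ∪ C₂) ≤ z Am + z (Am ∪ C) := by
    have h := hsplit C subset_rfl
    rw [inter_eq_right.mpr (hun ▸ subset_union_left), inter_eq_right.mpr (hun ▸ subset_union_right)]
      at h
    exact ((coRes_split_iff hAm.1).mp h).symm.trans_le (add_comm _ _).le
  have hd' := disjoint_left.mp hd
  obtain ⟨hO₁, hO₂⟩ := mem_psiFam_of_add_le hG hne hAm hB (by grind) (by grind) hmod
  have hAmC : ∀ c ∈ C, c ∉ Am := fun c hc hcAm => (mem_sdiff.mp hcAm).2 hc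
  constructor
  · intro hxy
    rcases mem_union.mp (hxy _ hO₂ (mem_union_right _ hy)) with h | h
    exacts [hAmC x (hun ▸ mem_union_left _ hx) h, hd' hx h]
  · intro hyx
    rcases mem_union.mp (hyx _ hO₁ (mem_union_right _ hx)) with h | h
    exacts [hAmC y (hun ▸ mem_union_right _ hy) h, hd' h hy]

end PsiFam

section PhiConforming

variable {I : Type*} [Fintype I] [DecidableEq I] {z : Finset I → WithTop ℝ} {P : Preo I}

lemma sum_eq_sum_of_mem_psiFam_phi (hsub : Submodular z) (hz0 : z ∅ = 0)
    (hc : Compatible z P) {As : Finset I} (hAs : As ∈ PsiFam z (Phi z P)) (a : I)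
    {y y' : I → ℝ}
    (hy : y ∈ EGP fun U => coRes z (P.downClosure (P.bubble a) \ P.bubble a) (U ∩ P.bubble a))
    (hy' : y' ∈ EGP fun U => coRes z (P.downClosure (P.bubble a) \ P.bubble a) (U ∩ P.bubble a)) :
    ∑ i ∈ As, y i = ∑ i ∈ As, y' i := by
  set C := P.bubble a
  set Am := P.downClosure C \ C
  have hAm : P.IsDownset Am := P.isDownset_downClosure_sdiff (P.convexF_bubble a)
  -- all points of `Π(z_C)` extend to points of `Φ(P)` by the same coordinates off `C`
  obtain ⟨xm, hxm⟩ := exists_add_mem_phiOn hsub hc Preo.isDownset_empty hAm (empty_subset _)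
  obtain ⟨u, hu⟩ := exists_add_mem_phiOn hsub hc P.isDownset_downClosure_sdiff_union
    Preo.isDownset_univ (subset_univ _)
  have hxm' := hxm 0 (zero_mem_phiOn_empty hz0)
  rw [zero_add] at hxm'
  have hext : ∀ y ∈ EGP fun U => coRes z Am (U ∩ C), xm + y + u ∈ Phi z P := fun y hy =>
    mem_phi_of_mem_phiOn_univ (hu _ (add_mem_phiOn_union_bubble hsub hc hAm hxm' hy))
  have h := WithTop.coe_inj.mp ((hAs.2 _ (hext y hy)).trans (hAs.2 _ (hext y' hy')).symm)
  simp only [Pi.add_apply, sum_add_distrib] at h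
  linarith

lemma mem_of_mem_psiFam_phi_of_le_of_le (hsub : Submodular z) (hz0 : z ∅ = 0)
    (hP : Conforms z P) {As : Finset I} (hAs : As ∈ PsiFam z (Phi z P)) {a b : I}
    (hab : P.le a b) (hba : P.le b a) (hb : b ∈ As) : a ∈ As := by
  set C := P.bubble b
  set Am := P.downClosure C \ C
  have hAm : P.IsDownset Am := P.isDownset_downClosure_sdiff (P.convexF_bubble b)
  have hsplit := eq_add_of_forall_sum_eq ((hsub.coRes Am).inter_right C)
    (by rw [empty_inter, coRes_empty (hP.1.1 Am hAm)])
    (by rw [univ_inter]; exact coRes_ne_top (hP.1.1 _ P.isDownset_downClosure_sdiff_union))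
    fun y hy y' hy' => sum_eq_sum_of_mem_psiFam_phi hsub hz0 hP.1 hAs b hy hy'
  by_contra ha
  refine (hP.2 C (P.convexF_bubble b) (C ∩ As) (C \ As) (disjoint_sdiff_inter C As).symm
    (by grind) (fun U hU => ?_) b ?_ a ?_).1 hba
  · have h := hsplit U
    rwa [inter_eq_left.mpr hU, show U ∩ As ∩ C = U ∩ (C ∩ As) by grind,
      show U \ As ∩ C = U ∩ (C \ As) by grind] at h
  · exact mem_inter.mpr ⟨P.self_mem_bubble b, hb⟩
  · exact mem_sdiff.mpr ⟨Preo.mem_bubble.mpr ⟨hba, hab⟩, ha⟩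

theorem isDownset_of_mem_psiFam_phi (hsub : Submodular z) (hz0 : z ∅ = 0) (hP : Conforms z P)
    {As : Finset I} (hAs : As ∈ PsiFam z (Phi z P)) : P.IsDownset As := by
  by_contra hnd
  obtain ⟨a, b, hab, ha, hb, hup⟩ := P.exists_le_of_not_isDownset
    (fun _ _ => mem_of_mem_psiFam_phi_of_le_of_le hsub hz0 hP hAs) hnd
  set C := univ.filter fun m => P.le a m ∧ P.le m b
  have hmemC : ∀ {m}, m ∈ C ↔ P.le a m ∧ P.le m b := by simp [C]
  have hC : P.ConvexF C := fun x y m hx hy hxm hmy =>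
    hmemC.mpr ⟨P.le_trans (hmemC.mp hx).1 hxm, P.le_trans hmy (hmemC.mp hy).2⟩
  set Am := P.downClosure C \ C
  have hAm : P.IsDownset Am := P.isDownset_downClosure_sdiff hC
  have hAm₁ : P.IsDownset (Am ∪ C \ As) := hAm.union_of_forall fun x y hy hxy => by
    obtain ⟨hyC, hyAs⟩ := mem_sdiff.mp hy
    by_cases hxC : x ∈ C
    · exact Or.inr (mem_sdiff.mpr ⟨hxC, fun hxAs =>
        hyAs (hup (hmemC.mp hxC).1 hxy (hmemC.mp hyC).2 hxAs)⟩)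
    · exact Or.inl (mem_sdiff.mpr ⟨P.mem_downClosure.mpr ⟨y, hyC, hxy⟩, hxC⟩)
  obtain ⟨g, hg⟩ := phi_nonempty hsub hz0 hP.1
  have htight : ∀ {D}, P.IsDownset D → Tight z g D := fun hD => hg.2 _ hD
  have hAm₂ : Tight z g (Am ∪ C ∩ As) := by
    rw [show Am ∪ C ∩ As = Am ∪ As ∩ (Am ∪ C) by grind]
    exact ((htight hAm).union_inter hsub hg.1.2
      (Tight.union_inter hsub hg.1.2 (hAs.2 g hg) (htight P.isDownset_downClosure_sdiff_union)).2).1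
  have hsplit := coRes_split_of_tight hsub (disjoint_sdiff_inter C As) (htight hAm)
    (htight hAm₁) hAm₂
    (by rw [union_assoc, sdiff_union_inter]; exact htight P.isDownset_downClosure_sdiff_union)
  rw [sdiff_union_inter] at hsplit
  exact (hP.2 C hC (C \ As) (C ∩ As) (disjoint_sdiff_inter C As) (sdiff_union_inter C As) hsplit a
    (mem_sdiff.mpr ⟨hmemC.mpr ⟨P.le_refl a, hab⟩, ha⟩) b
    (mem_inter.mpr ⟨hmemC.mpr ⟨hab, P.le_refl b⟩, hb⟩)).1 hab

theorem psiPre_phi (hsub : Submodular z) (hz0 : z ∅ = 0) (hP : Conforms z P) :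
    PsiPre z (Phi z P) = P := by
  have h : PsiFam z (Phi z P) = {A | P.IsDownset A} :=
    Set.ext fun A => ⟨isDownset_of_mem_psiFam_phi hsub hz0 hP,
      fun hA => ⟨hP.1.1 A hA, fun x hx => hx.2 A hA⟩⟩
  rw [PsiPre, h, P.preOfFam_setOf_isDownset]

end PhiConforming

theorem faces_conforming_bijection_general
    {I : Type*} [Fintype I] [DecidableEq I]
    (z : Finset I → WithTop ℝ) (hz0 : z ∅ = 0)
    (hsub : Submodular z) :
    (∀ P : Preo I, Conforms z P →
      IsExposed ℝ (EGP z) (Phi z P) ∧ (Phi z P).Nonempty ∧ PsiPre z (Phi z P) = P) ∧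
    (∀ G : Set (I → ℝ), G ⊆ EGP z → IsExposed ℝ (EGP z) G → G.Nonempty →
      Conforms z (PsiPre z G) ∧ Phi z (PsiPre z G) = G) :=
  ⟨fun _ hP => ⟨isExposed_tightCut fun A hA => hP.1.1 A hA, phi_nonempty hsub hz0 hP.1,
      psiPre_phi hsub hz0 hP⟩,
    fun _ hG hexp hne => ⟨conforms_psiPre hsub hz0 hG hne, phi_psiPre hsub hz0 hG hexp hne⟩⟩

/-- `Φ_z` is surjective onto the set of nonempty faces of `Π(z)`, the
image of `Ψ_z` on nonempty faces is exactly the set of preorders conforming to `z`, and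
`Φ_z`, `Ψ_z` restrict to mutually inverse bijections between conforming preorders and
nonempty faces of `Π(z)`. -/
theorem faces_conforming_bijection
    {I : Type*} [Fintype I] [DecidableEq I]
    (z : Finset I → WithTop ℝ) (hz0 : z ∅ = 0) (hzI : z Finset.univ ≠ ⊤)
    (hsub : Submodular z) :
    (∀ P : Preo I, Conforms z P →
      IsExposed ℝ (EGP z) (Phi z P) ∧ (Phi z P).Nonempty ∧ PsiPre z (Phi z P) = P) ∧
    (∀ G : Set (I → ℝ), G ⊆ EGP z → IsExposed ℝ (EGP z) G → G.Nonempty →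
      Conforms z (PsiPre z G) ∧ Phi z (PsiPre z G) = G) :=
  faces_conforming_bijection_general z hz0 hsub
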